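/- Let α > 0, let [b,c] ⊆ [0,∞) be a closed interval, and let f : (α,∞) → ℝ be a convex function such that for every t ∈ (α,∞) and every subgradient v of f at t, the intercept f(t) − tv lies in [b,c]. For γ ∈ [b,c] define s(γ) = sup{v ∈ ℝ : γ + tv ≤ f(t) for all t ∈ (α,∞)}. Then for every t ∈ (α,∞), f(t) = sup over γ ∈ [b,c] of (γ + s(γ)·t). -/

import Mathlib

/-!
Every affine minorant `u ↦ γ + u v` of `f` on `(α, ∞)` lies below `f` at `t > 0`, so
`γ + s(γ) t ≤ f t` once the set of such slopes `v` is nonempty (for the empty set `sSup` is the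
junk value `0`). It is nonempty for every `γ`: since `α > 0`, decreasing the slope of any minorant
line pushes it down to any prescribed intercept. Conversely, the right derivative of `f` at `t` is
a subgradient, so its support line touches `f` at `t`, and its intercept lies in `[b, c]` by
hypothesis; hence the supremum over `γ ∈ [b, c]` is attained and equals `f t`.
-/

open Set

theorem ConvexOn.add_rightDeriv_mul_sub_le {S : Set ℝ} {f : ℝ → ℝ} {x y : ℝ}
    (hfc : ConvexOn ℝ S f) (hx : x ∈ interior S) (hy : y ∈ S) :
    f x + derivWithin f (Ioi x) x * (y - x) ≤ f y := by
  rcases lt_trichotomy y x with hyx | rfl | hxy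
  · have hslope := (hfc.slope_le_leftDeriv_of_mem_interior hy hx hyx).trans
      (hfc.leftDeriv_le_rightDeriv_of_mem_interior hx)
    rw [slope_def_field, div_le_iff₀ (sub_pos.2 hyx)] at hslope
    linarith
  · simp
  · have hslope := hfc.rightDeriv_le_slope_of_mem_interior hx hy hxy
    rw [slope_def_field, le_div_iff₀ (sub_pos.2 hxy)] at hslope
    linarith

def affineMinorantSlopes (S : Set ℝ) (f : ℝ → ℝ) (γ : ℝ) : Set ℝ :=
  {v | ∀ u ∈ S, γ + u * v ≤ f u}

section affineMinorantSlopes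

variable {S : Set ℝ} {f : ℝ → ℝ} {γ t : ℝ}

theorem affineMinorantSlopes_subset_Iic (ht : t ∈ S) (ht0 : 0 < t) :
    affineMinorantSlopes S f γ ⊆ Iic ((f t - γ) / t) := fun v hv => by
  rw [mem_Iic, le_div_iff₀ ht0]
  linarith [hv t ht]

theorem add_sSup_affineMinorantSlopes_mul_le (ht : t ∈ S) (ht0 : 0 < t)
    (hne : (affineMinorantSlopes S f γ).Nonempty) :
    γ + sSup (affineMinorantSlopes S f γ) * t ≤ f t := by
  have hsSup : sSup (affineMinorantSlopes S f γ) ≤ (f t - γ) / t :=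
    csSup_le hne (affineMinorantSlopes_subset_Iic ht ht0)
  rw [le_div_iff₀ ht0] at hsSup
  linarith

theorem add_sSup_affineMinorantSlopes_mul_eq {v : ℝ} (ht : t ∈ S) (ht0 : 0 < t)
    (hv : v ∈ affineMinorantSlopes S f γ) (htouch : γ + t * v = f t) :
    γ + sSup (affineMinorantSlopes S f γ) * t = f t := by
  refine le_antisymm (add_sSup_affineMinorantSlopes_mul_le ht ht0 ⟨v, hv⟩) ?_
  have hle : v ≤ sSup (affineMinorantSlopes S f γ) :=
    le_csSup ⟨_, affineMinorantSlopes_subset_Iic ht ht0⟩ hv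
  linarith [mul_le_mul_of_nonneg_right hle ht0.le]

theorem affineMinorantSlopes_nonempty {α γ₀ v₀ : ℝ} (hα : 0 < α) (hS : S ⊆ Ici α)
    (hv₀ : v₀ ∈ affineMinorantSlopes S f γ₀) (γ : ℝ) :
    (affineMinorantSlopes S f γ).Nonempty := by
  set d := max 0 (γ - γ₀)
  refine ⟨v₀ - d / α, fun u hu => ?_⟩
  have hd : d ≤ u * (d / α) := by
    rw [mul_div_assoc', le_div_iff₀ hα, mul_comm u]
    exact mul_le_mul_of_nonneg_left (mem_Ici.1 (hS hu)) (le_max_left _ _)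
  linarith [hv₀ u hu, le_max_right 0 (γ - γ₀)]

end affineMinorantSlopes

theorem stmt_14_general (α : ℝ) (hα : 0 < α) (b c : ℝ)
    (f : ℝ → ℝ) (hconv : ConvexOn ℝ (Set.Ioi α) f)
    (hint : ∀ t ∈ Set.Ioi α, ∀ v : ℝ,
      (∀ u ∈ Set.Ioi α, f t + v * (u - t) ≤ f u) →
      f t - t * v ∈ Set.Icc b c)
    (t : ℝ) (ht : t ∈ Set.Ioi α) :
    f t = sSup ((fun γ : ℝ =>
      γ + sSup {v : ℝ | ∀ u ∈ Set.Ioi α, γ + u * v ≤ f u} * t) '' Set.Icc b c) := by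
  have ht0 : 0 < t := hα.trans ht
  set v₀ := derivWithin f (Ioi t) t
  have hsupport : ∀ u ∈ Ioi α, f t + v₀ * (u - t) ≤ f u := fun u hu =>
    hconv.add_rightDeriv_mul_sub_le (by rwa [interior_Ioi]) hu
  have hv₀ : v₀ ∈ affineMinorantSlopes (Ioi α) f (f t - t * v₀) := fun u hu => by
    linarith [hsupport u hu]
  refine Eq.symm (IsGreatest.csSup_eq ⟨⟨f t - t * v₀, hint t ht v₀ hsupport,
    add_sSup_affineMinorantSlopes_mul_eq ht ht0 hv₀ (by ring)⟩, ?_⟩)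
  rintro _ ⟨γ, -, rfl⟩
  exact add_sSup_affineMinorantSlopes_mul_le ht ht0
    (affineMinorantSlopes_nonempty hα Ioi_subset_Ici_self hv₀ γ)

/-- with `s(γ) = sup{v : γ + tv ≤ f(t) for all t ∈ (α,∞)}`, one has
`f(t) = sup_{γ ∈ [b,c]} (γ + s(γ)·t)` for every `t ∈ (α,∞)`. -/
theorem stmt_14 (α : ℝ) (hα : 0 < α) (b c : ℝ) (hb : 0 ≤ b) (hbc : b ≤ c)
    (f : ℝ → ℝ) (hconv : ConvexOn ℝ (Set.Ioi α) f)
    (hint : ∀ t ∈ Set.Ioi α, ∀ v : ℝ,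
      (∀ u ∈ Set.Ioi α, f t + v * (u - t) ≤ f u) →
      f t - t * v ∈ Set.Icc b c)
    (t : ℝ) (ht : t ∈ Set.Ioi α) :
    f t = sSup ((fun γ : ℝ =>
      γ + sSup {v : ℝ | ∀ u ∈ Set.Ioi α, γ + u * v ≤ f u} * t) '' Set.Icc b c) :=
  stmt_14_general α hα b c f hconv hint t ht
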